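/- Let f₁,...,fₙ ∈ [0,1]. If min_{i} √λ·(fᵢ − f̄)/√(n·Varₙ) ≥ −1, then the maximum of pᵀf over the set {p ∈ ℝⁿ : p ≥ 0, ∑pᵢ = 1, ‖p − 𝟙/n‖₂² ≤ λ/n²} equals f̄ + √(λ·Varₙ/n), where f̄ is the mean and Varₙ > 0 is the empirical variance of the fᵢ. -/

import Mathlib

/-!
Writing `p = 𝟙/n + q` with `∑ q = 0`, the objective is `pᵀf = f̄ + ∑ qᵢ (fᵢ - f̄)`, so by
Cauchy–Schwarz it is at most `f̄ + ‖q‖ ‖f - f̄‖ ≤ f̄ + (√λ / n) √(n Varₙ)`. Equality holds for `q`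
proportional to `f - f̄`, and the hypothesis on the minimum says exactly that this `p` is nonnegative.
-/

open Finset

variable {ι : Type*} [Fintype ι]

lemma sum_mul_eq_add_sum_sub_mul_sub {p f : ι → ℝ} {m : ℝ} (hp : ∑ i, p i = 1)
    (hm : ∑ i, f i = Fintype.card ι * m) :
    ∑ i, p i * f i = m + ∑ i, (p i - 1 / Fintype.card ι) * (f i - m) := by
  simp only [sub_mul, mul_sub, sum_sub_distrib, ← mul_sum, ← sum_mul, hp, hm, sum_const,
    card_univ, nsmul_eq_mul]
  ring

lemma sum_mul_le_add_mul_sqrt_sum_sq {p f : ι → ℝ} {m r : ℝ} (hp : ∑ i, p i = 1)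
    (hm : ∑ i, f i = Fintype.card ι * m) (hr : 0 ≤ r)
    (hpr : ∑ i, (p i - 1 / Fintype.card ι) ^ 2 ≤ r ^ 2) :
    ∑ i, p i * f i ≤ m + r * √(∑ i, (f i - m) ^ 2) := by
  rw [sum_mul_eq_add_sum_sub_mul_sub hp hm, add_le_add_iff_left]
  calc ∑ i, (p i - 1 / Fintype.card ι) * (f i - m)
      ≤ √(∑ i, (p i - 1 / Fintype.card ι) ^ 2) * √(∑ i, (f i - m) ^ 2) :=
        Real.sum_mul_le_sqrt_mul_sqrt _ _ _
    _ ≤ r * √(∑ i, (f i - m) ^ 2) := by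
        gcongr
        exact (Real.sqrt_le_sqrt hpr).trans_eq (Real.sqrt_sq hr)

/-- For constant `f` the coefficient is `r / 0 = 0`, and these are the uniform weights. -/
noncomputable def tiltedWeights (f : ι → ℝ) (m r : ℝ) (i : ι) : ℝ :=
  1 / Fintype.card ι + r / √(∑ j, (f j - m) ^ 2) * (f i - m)

lemma tiltedWeights_nonneg [Nonempty ι] {f : ι → ℝ} {m r : ℝ} {i : ι}
    (h : -1 ≤ Fintype.card ι * r * (f i - m) / √(∑ j, (f j - m) ^ 2)) :
    0 ≤ tiltedWeights f m r i := by
  have hN : (0 : ℝ) < Fintype.card ι := by exact_mod_cast Fintype.card_pos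
  have : tiltedWeights f m r i
      = (1 + Fintype.card ι * r * (f i - m) / √(∑ j, (f j - m) ^ 2)) / Fintype.card ι := by
    unfold tiltedWeights
    field_simp
  rw [this]
  exact div_nonneg (by linarith) hN.le

lemma sum_tiltedWeights [Nonempty ι] {f : ι → ℝ} {m : ℝ} (hm : ∑ i, f i = Fintype.card ι * m)
    (r : ℝ) : ∑ i, tiltedWeights f m r i = 1 := by
  have hN : (Fintype.card ι : ℝ) ≠ 0 := by exact_mod_cast Fintype.card_ne_zero
  simp only [tiltedWeights, sum_add_distrib, ← mul_sum, sum_sub_distrib, hm, sum_const,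
    card_univ, nsmul_eq_mul]
  field_simp
  ring

lemma sum_sq_tiltedWeights_sub_le (f : ι → ℝ) (m r : ℝ) :
    ∑ i, (tiltedWeights f m r i - 1 / Fintype.card ι) ^ 2 ≤ r ^ 2 := by
  set S := ∑ j, (f j - m) ^ 2
  have hS : 0 ≤ S := by positivity
  calc ∑ i, (tiltedWeights f m r i - 1 / Fintype.card ι) ^ 2
      = r ^ 2 * (S / √S ^ 2) := by
        simp only [tiltedWeights, add_sub_cancel_left, mul_pow, div_pow, ← mul_sum]
        ring
    _ ≤ r ^ 2 := by
        rw [Real.sq_sqrt hS]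
        exact mul_le_of_le_one_right (sq_nonneg r) (div_self_le_one S)

lemma sum_tiltedWeights_mul [Nonempty ι] {f : ι → ℝ} {m : ℝ}
    (hm : ∑ i, f i = Fintype.card ι * m) (r : ℝ) :
    ∑ i, tiltedWeights f m r i * f i = m + r * √(∑ i, (f i - m) ^ 2) := by
  rw [sum_mul_eq_add_sum_sub_mul_sub (sum_tiltedWeights hm r) hm]
  simp only [tiltedWeights, add_sub_cancel_left, mul_assoc, ← mul_sum, ← sq]
  rw [div_mul_eq_mul_div, mul_div_assoc, Real.div_sqrt]

theorem drbl_max_under_min_condition_general (n : ℕ) (hn : 2 ≤ n) (lam : ℝ) (hlam : 0 < lam)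
    (f : Fin n → ℝ)
    (fbar : ℝ) (hfbar : fbar = (∑ i, f i) / n)
    (Varn : ℝ) (hVarn : Varn = (∑ i, (f i - fbar) ^ 2) / n)
    (hmin : ∀ i, Real.sqrt lam * (f i - fbar) / Real.sqrt (n * Varn) ≥ -1) :
    IsGreatest
      {s : ℝ | ∃ p : Fin n → ℝ, (∀ i, 0 ≤ p i) ∧ (∑ i, p i = 1) ∧
        (∑ i, (p i - 1 / n) ^ 2 ≤ lam / (n : ℝ) ^ 2) ∧ s = ∑ i, p i * f i}
      (fbar + Real.sqrt (lam * Varn / n)) := by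
  have : NeZero n := ⟨by omega⟩
  have hn0 : (n : ℝ) ≠ 0 := by positivity
  have hm : ∑ i, f i = Fintype.card (Fin n) * fbar := by
    rw [Fintype.card_fin, hfbar]; field_simp
  have hS : ∑ i, (f i - fbar) ^ 2 = n * Varn := by rw [hVarn]; field_simp
  have hr : 0 ≤ √lam / n := by positivity
  have hr_sq : (√lam / n) ^ 2 = lam / (n : ℝ) ^ 2 := by rw [div_pow, Real.sq_sqrt hlam.le]
  have hvalue : √lam / n * √(∑ i, (f i - fbar) ^ 2) = √(lam * Varn / n) := by
    rw [hS, show lam * Varn / n = lam * (n * Varn) / n ^ 2 by field_simp, Real.sqrt_div',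
      Real.sqrt_mul hlam.le, Real.sqrt_sq (Nat.cast_nonneg n)]
    · ring
    · positivity
  refine ⟨⟨tiltedWeights f fbar (√lam / n), fun i => tiltedWeights_nonneg ?_,
    sum_tiltedWeights hm _, ?_, ?_⟩, ?_⟩
  · simpa [hS, mul_div_cancel₀ _ hn0] using hmin i
  · simpa [hr_sq] using sum_sq_tiltedWeights_sub_le f fbar (√lam / n)
  · rw [sum_tiltedWeights_mul hm, hvalue]
  · rintro s ⟨p, -, hp, hpr, rfl⟩
    rw [← hvalue]
    exact sum_mul_le_add_mul_sqrt_sum_sq hp hm hr (by simpa [hr_sq] using hpr)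

theorem drbl_max_under_min_condition (n : ℕ) (hn : 2 ≤ n) (lam : ℝ) (hlam : 0 < lam)
    (f : Fin n → ℝ) (hf : ∀ i, f i ∈ Set.Icc (0 : ℝ) 1)
    (fbar : ℝ) (hfbar : fbar = (∑ i, f i) / n)
    (Varn : ℝ) (hVarn : Varn = (∑ i, (f i - fbar) ^ 2) / n) (hVpos : 0 < Varn)
    (hmin : ∀ i, Real.sqrt lam * (f i - fbar) / Real.sqrt (n * Varn) ≥ -1) :
    IsGreatest
      {s : ℝ | ∃ p : Fin n → ℝ, (∀ i, 0 ≤ p i) ∧ (∑ i, p i = 1) ∧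
        (∑ i, (p i - 1 / n) ^ 2 ≤ lam / (n : ℝ) ^ 2) ∧ s = ∑ i, p i * f i}
      (fbar + Real.sqrt (lam * Varn / n)) :=
  drbl_max_under_min_condition_general n hn lam hlam f fbar hfbar Varn hVarn hmin
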